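/- arXiv:2311.08652 — 5 statements merged into one kernel-verified Lean document; each statement's English description precedes it below -/
import Mathlib

section
/- Let S = ⟨X, X̃₀, Y, E, f, o⟩ be a system, R ⊆ X a requirement, and let X̃₀ ⊆ X̃ ⊆ X and Ẽ ⊆ E. Suppose X̃ contains all reachable states of S in every environment e ∈ Ẽ, i.e., Reach_S(e, t) ⊆ X̃ for all e ∈ Ẽ and all t ≥ 0. Suppose M : X → Set Y is a (X̃₀, X̃, Ẽ)-perception contract, i.e., (conformance) for all x ∈ X̃ and all e ∈ Ẽ, o(x, e) ⊆ M(x), and (correctness) every execution of S_M with initial set X̃₀ satisfies α(t) ∈ R for all t ≥ 0. Then ⟨o, X̃₀, Ẽ⟩ ⊨ R, i.e., for every e ∈ Ẽ, every execution of S with initial set X̃₀ in environment e satisfies α(t) ∈ R for all t ≥ 0. -/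
/-- An execution of the system `S = ⟨X, X₀, Y, E, f, o⟩` in environment `e`. -/
def IsExec {X Y E : Type*} (X₀ : Set X) (f : X → Y → Set X) (o : X → E → Set Y)
    (e : E) (α : ℕ → X) : Prop :=
  α 0 ∈ X₀ ∧ ∀ t : ℕ, ∃ y ∈ o (α t) e, α (t + 1) ∈ f (α t) y

/-- An execution of the contract system `S_M` (observer replaced by `M`). -/
def IsExecM {X Y : Type*} (X₀ : Set X) (f : X → Y → Set X) (M : X → Set Y)
    (α : ℕ → X) : Prop :=
  α 0 ∈ X₀ ∧ ∀ t : ℕ, ∃ y ∈ M (α t), α (t + 1) ∈ f (α t) y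

/-- The reachable set of `S` in environment `e` at time `t`. -/
def ReachS {X Y E : Type*} (X₀ : Set X) (f : X → Y → Set X) (o : X → E → Set Y)
    (e : E) (t : ℕ) : Set X :=
  {x | ∃ α : ℕ → X, IsExec X₀ f o e α ∧ α t = x}

/-- Proposition 1 (perception contracts prove system-level safety): if `X̃` contains
all reachable states of `S` over environments in `Ẽ`, and `M` is a
`(X̃₀, X̃, Ẽ)`-perception contract (conformant on `X̃ × Ẽ` and correct for `R`),
then `⟨o, X̃₀, Ẽ⟩ ⊨ R`. -/
theorem pc_implies_requirement {X Y E : Type*}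
    (X₀ Xt : Set X) (Et : Set E) (f : X → Y → Set X) (o : X → E → Set Y)
    (R : Set X) (M : X → Set Y)
    (hX₀ : X₀ ⊆ Xt)
    (hReach : ∀ e ∈ Et, ∀ t : ℕ, ReachS X₀ f o e t ⊆ Xt)
    (hConf : ∀ x ∈ Xt, ∀ e ∈ Et, o x e ⊆ M x)
    (hCorr : ∀ α : ℕ → X, IsExecM X₀ f M α → ∀ t : ℕ, α t ∈ R) :
    ∀ e ∈ Et, ∀ α : ℕ → X, IsExec X₀ f o e α → ∀ t : ℕ, α t ∈ R := by
  intro e he α hα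
  apply hCorr
  refine ⟨hα.1, fun t => ?_⟩
  obtain ⟨y, hy, hf⟩ := hα.2 t
  exact ⟨y, hConf (α t) (hReach e he t ⟨α, hα, rfl⟩) e he hy, hf⟩
end

section
/- Let S = ⟨X, X₀, Y, E, f, o⟩ be a system, X̃ ⊆ X, Ẽ ⊆ E, and M : X → Set Y a map satisfying the conformance condition: for all x ∈ X̃ and all e ∈ Ẽ, o(x, e) ⊆ M(x). Suppose Reach_S(e, t) ⊆ X̃ for all e ∈ Ẽ and all t ≥ 0. Then for every e ∈ Ẽ, every execution α of S in e is also an execution of S_M (with the same initial set); consequently Reach_S(e, t) ⊆ Reach_{S_M}(t) for all e ∈ Ẽ and all t ≥ 0. -/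
/-- The reachable set of the contract system `S_M` at time `t`. -/
def ReachM {X Y : Type*} (X₀ : Set X) (f : X → Y → Set X) (M : X → Set Y)
    (t : ℕ) : Set X :=
  {x | ∃ α : ℕ → X, IsExecM X₀ f M α ∧ α t = x}

/-- If `M` is conformant over `X̃ × Ẽ` and `X̃` contains all reachable states of `S`
over environments in `Ẽ`, then every execution of `S` in any `e ∈ Ẽ` is also an
execution of `S_M`; consequently `Reach_S(e, t) ⊆ Reach_{S_M}(t)`. -/
theorem exec_conformant_is_execM {X Y E : Type*}
    (X₀ Xt : Set X) (Et : Set E) (f : X → Y → Set X) (o : X → E → Set Y)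
    (M : X → Set Y)
    (hConf : ∀ x ∈ Xt, ∀ e ∈ Et, o x e ⊆ M x)
    (hReach : ∀ e ∈ Et, ∀ t : ℕ, ReachS X₀ f o e t ⊆ Xt) :
    (∀ e ∈ Et, ∀ α : ℕ → X, IsExec X₀ f o e α → IsExecM X₀ f M α) ∧
    (∀ e ∈ Et, ∀ t : ℕ, ReachS X₀ f o e t ⊆ ReachM X₀ f M t) := by
  have key : ∀ e ∈ Et, ∀ α : ℕ → X, IsExec X₀ f o e α → IsExecM X₀ f M α := by
    intro e he α hα
    refine ⟨hα.1, fun t => ?_⟩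
    obtain ⟨y, hy, hf⟩ := hα.2 t
    have hx : α t ∈ Xt := hReach e he t ⟨α, hα, rfl⟩
    exact ⟨y, hConf _ hx e he hy, hf⟩
  refine ⟨key, fun e he t x hx => ?_⟩
  obtain ⟨α, hα, rfl⟩ := hx
  exact ⟨α, key e he α hα, rfl⟩
end

section
/- Let S_M be a system with dynamics f : X → Y → Set X and contract observer M : X → Set Y, let R ⊆ X be a requirement, and let X₀ ⊆ X. Suppose I is a finite index set and {X_i}_{i ∈ I} is a family of subsets of X with X₀ ⊆ ⋃_{i ∈ I} X_i, and suppose that for each i ∈ I there is a map Reach_i : ℕ → Set X such that for all t ≥ 0: (a) Reach_{S_M, X_i}(t) ⊆ Reach_i(t) (over-approximation of the reachable set of S_M with initial set X_i), and (b) Reach_i(t) ⊆ R. Then every execution of S_M with initial set X₀ satisfies α(t) ∈ R for all t ≥ 0, i.e., ⟨M, X₀, Ẽ⟩ ⊨ R for every environment set Ẽ. -/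
/-- Soundness of `DaRePC`: if the initial set `X₀` is covered by a finite family of
sets `Xᵢ`, and for each `i` some over-approximation `Reachᵢ` of the reachable sets
of `S_M` from `Xᵢ` stays within the requirement `R` at all times, then every
execution of `S_M` from `X₀` satisfies `R` at all times. -/
theorem darepc_soundness {X Y I : Type*} [Finite I]
    (f : X → Y → Set X) (M : X → Set Y) (R X₀ : Set X)
    (Xi : I → Set X) (ReachI : I → ℕ → Set X)
    (hcover : X₀ ⊆ ⋃ i : I, Xi i)
    (hover : ∀ i : I, ∀ t : ℕ, ReachM (Xi i) f M t ⊆ ReachI i t)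
    (hsafe : ∀ i : I, ∀ t : ℕ, ReachI i t ⊆ R) :
    ∀ α : ℕ → X, IsExecM X₀ f M α → ∀ t : ℕ, α t ∈ R := by
  intro α hα t
  obtain ⟨h0, hstep⟩ := hα
  obtain ⟨i, hi⟩ := Set.mem_iUnion.mp (hcover h0)
  exact hsafe i t (hover i t ⟨α, ⟨hi, hstep⟩, rfl⟩)
end

section
/- Let S = ⟨X, X_c, Y, E, f, ĥ⟩ be a system with a deterministic observer ĥ : X → E → Y (i.e., o(x, e) = {ĥ(x, e)}), let R ⊆ X, let Ẽ ⊆ E, and let M : X → Set Y satisfy ĥ(x, e) ∈ M(x) for all x ∈ X and all e ∈ Ẽ (conformance over all of X). Suppose there exists a time t such that Reach_{S_M, X_c}(t) ∩ R = ∅. Then for every e ∈ Ẽ, every execution α of S with initial set X_c in e satisfies α(t) ∉ R. In particular, if X_c ≠ ∅ and f(x, y) ≠ ∅ for all x ∈ X, y ∈ Y (so executions exist), then ⟨ĥ, X_c, Ẽ⟩ ⊭ R, i.e., X_c and Ẽ form a genuine counter-example. -/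
/-- A counter-example returned by `DaRePC` is a genuine counter-example: with a
deterministic observer `ĥ` conformant to `M` over all of `X` and all `e ∈ Ẽ`, if
the over-approximated reachable set of `S_M` from `X_c` is disjoint from `R` at
some time `t`, then every execution of the actual system from `X_c` in any
`e ∈ Ẽ` is outside `R` at time `t`; in particular, if `X_c` is nonempty, the
dynamics are nonempty-valued, and `Ẽ` is nonempty, then `⟨ĥ, X_c, Ẽ⟩ ⊭ R`. -/
theorem counterexample_is_genuine {X Y E : Type*}
    (f : X → Y → Set X) (hhat : X → E → Y) (Xc : Set X) (Et : Set E)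
    (R : Set X) (M : X → Set Y)
    (hconf : ∀ x : X, ∀ e ∈ Et, hhat x e ∈ M x)
    (t : ℕ) (hdisj : ReachM Xc f M t ∩ R = ∅) :
    (∀ e ∈ Et, ∀ α : ℕ → X,
        IsExec Xc f (fun x e' => {hhat x e'}) e α → α t ∉ R) ∧
    (Xc.Nonempty → (∀ (x : X) (y : Y), (f x y).Nonempty) → Et.Nonempty →
      ¬ (∀ e ∈ Et, ∀ α : ℕ → X,
          IsExec Xc f (fun x e' => {hhat x e'}) e α → ∀ s : ℕ, α s ∈ R)) := by
  have main : ∀ e ∈ Et, ∀ α : ℕ → X,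
      IsExec Xc f (fun x e' => {hhat x e'}) e α → α t ∉ R := by
    intro e he α hα hR
    have hM : IsExecM Xc f M α := by
      refine ⟨hα.1, fun s => ?_⟩
      obtain ⟨y, hy, hfy⟩ := hα.2 s
      simp only [Set.mem_singleton_iff] at hy
      exact ⟨y, hy ▸ hconf (α s) e he, hfy⟩
    have : α t ∈ ReachM Xc f M t ∩ R := ⟨⟨α, hM, rfl⟩, hR⟩
    simp [hdisj] at this
  refine ⟨main, fun ⟨x0, hx0⟩ hf ⟨e, he⟩ hall => ?_⟩
  choose g hg using fun x => hf x (hhat x e)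
  let α : ℕ → X := fun n => Nat.rec x0 (fun _ x => g x) n
  have hexec : IsExec Xc f (fun x e' => {hhat x e'}) e α :=
    ⟨hx0, fun s => ⟨hhat (α s) e, rfl, hg (α s)⟩⟩
  exact main e he α hexec (hall e he α hexec t)
end

section
/- Let f : ℝⁿ × ℝᵐ → ℝⁿ and h : ℝⁿ → ℝᵐ be continuous maps, and let x₀ ∈ ℝⁿ. Define the nominal execution α : ℕ → ℝⁿ by α(0) = x₀ and α(t+1) = f(α(t), h(α(t))). For a set X' ⊆ ℝⁿ and radius r ≥ 0, define the reachable sets of the system with contract M_r(x) = closedBall(h(x), r) by Reach_{X', r}(0) = X' and Reach_{X', r}(t+1) = { f(x, y) : x ∈ Reach_{X', r}(t), y ∈ closedBall(h(x), r) }. Then for every time horizon T ∈ ℕ and every ε > 0 there exists δ > 0 such that for all X' ⊆ closedBall(x₀, δ) and all r ∈ [0, δ], one has Reach_{X', r}(t) ⊆ ball(α(t), ε) for every t ≤ T. In particular, if X_k is a sequence of sets shrinking to {x₀} (X_k ⊆ closedBall(x₀, δ_k) with δ_k → 0) and r_k → 0, then for each fixed horizon T the reachable sets Reach_{X_k, r_k}(t)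 converge to the single nominal execution: for every ε > 0 there is K with Reach_{X_k, r_k}(t) ⊆ ball(α(t), ε) for all k ≥ K and all t ≤ T. -/
open Metric Filter

/-- The nominal execution: `α 0 = x₀`, `α (t+1) = f (α t, h (α t))`. -/
def nominalExec {n m : ℕ}
    (f : EuclideanSpace ℝ (Fin n) × EuclideanSpace ℝ (Fin m) → EuclideanSpace ℝ (Fin n))
    (h : EuclideanSpace ℝ (Fin n) → EuclideanSpace ℝ (Fin m))
    (x₀ : EuclideanSpace ℝ (Fin n)) : ℕ → EuclideanSpace ℝ (Fin n)
  | 0 => x₀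
  | t + 1 => f (nominalExec f h x₀ t, h (nominalExec f h x₀ t))

/-- Reachable sets of the system with ball-shaped contract
`M_r(x) = closedBall (h x) r` from the initial set `X'`. -/
def reachBall {n m : ℕ}
    (f : EuclideanSpace ℝ (Fin n) × EuclideanSpace ℝ (Fin m) → EuclideanSpace ℝ (Fin n))
    (h : EuclideanSpace ℝ (Fin n) → EuclideanSpace ℝ (Fin m))
    (X' : Set (EuclideanSpace ℝ (Fin n))) (r : ℝ) :
    ℕ → Set (EuclideanSpace ℝ (Fin n))
  | 0 => X'
  | t + 1 => {z | ∃ x ∈ reachBall f h X' r t, ∃ y ∈ closedBall (h x) r, z = f (x, y)}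

lemma reachBall_mono {n m : ℕ}
    (f : EuclideanSpace ℝ (Fin n) × EuclideanSpace ℝ (Fin m) → EuclideanSpace ℝ (Fin n))
    (h : EuclideanSpace ℝ (Fin n) → EuclideanSpace ℝ (Fin m))
    {X X' : Set (EuclideanSpace ℝ (Fin n))} {r r' : ℝ}
    (hX : X ⊆ X') (hr : r ≤ r') :
    ∀ t, reachBall f h X r t ⊆ reachBall f h X' r' t := by
  intro t
  induction t with
  | zero => exact hX
  | succ t ih =>
    rintro z ⟨x, hx, y, hy, rfl⟩
    exact ⟨x, ih hx, y, closedBall_subset_closedBall hr hy, rfl⟩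

lemma reach_key {n m : ℕ}
    (f : EuclideanSpace ℝ (Fin n) × EuclideanSpace ℝ (Fin m) → EuclideanSpace ℝ (Fin n))
    (h : EuclideanSpace ℝ (Fin n) → EuclideanSpace ℝ (Fin m))
    (hf : Continuous f) (hh : Continuous h)
    (x₀ : EuclideanSpace ℝ (Fin n)) :
    ∀ T : ℕ, ∀ ε > (0 : ℝ), ∃ δ > (0 : ℝ),
      ∀ X' ⊆ closedBall x₀ δ, ∀ r ∈ Set.Icc (0 : ℝ) δ, ∀ t ≤ T,
        reachBall f h X' r t ⊆ ball (nominalExec f h x₀ t) ε := by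
  intro T
  induction T with
  | zero =>
    intro ε hε
    refine ⟨ε / 2, by linarith, fun X' hX' r hr t ht => ?_⟩
    interval_cases t
    exact fun z hz => lt_of_le_of_lt (mem_closedBall.mp (hX' hz)) (by linarith)
  | succ T ih =>
    intro ε hε
    -- continuity of F (x, w) = f (x, h x + w) at (α T, 0)
    set α := nominalExec f h x₀ with hα
    have hF : Continuous (fun p : EuclideanSpace ℝ (Fin n) × EuclideanSpace ℝ (Fin m) =>
        f (p.1, h p.1 + p.2)) :=
      hf.comp (continuous_fst.prodMk ((hh.comp continuous_fst).add continuous_snd))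
    have hcont : ContinuousAt (fun p : EuclideanSpace ℝ (Fin n) × EuclideanSpace ℝ (Fin m) =>
        f (p.1, h p.1 + p.2)) (α T, 0) := hF.continuousAt
    rw [Metric.continuousAt_iff] at hcont
    obtain ⟨δ₁, hδ₁, hδ₁'⟩ := hcont ε hε
    -- previous-level modulus
    obtain ⟨δ₂, hδ₂, hδ₂'⟩ := ih (min ε (δ₁ / 2)) (by positivity)
    refine ⟨min δ₂ (min ε (δ₁ / 2)), by positivity, fun X' hX' r hr t ht => ?_⟩
    have hX'' : X' ⊆ closedBall x₀ δ₂ :=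
      hX'.trans (closedBall_subset_closedBall (min_le_left _ _))
    have hr' : r ∈ Set.Icc (0 : ℝ) δ₂ := ⟨hr.1, hr.2.trans (min_le_left _ _)⟩
    rcases Nat.lt_succ_iff_lt_or_eq.mp (Nat.lt_succ_of_le ht) with ht' | rfl
    · exact fun z hz =>
        lt_of_lt_of_le (mem_ball.mp (hδ₂' X' hX'' r hr' t (Nat.lt_succ_iff.mp ht') hz))
          (min_le_left _ _)
    · rintro z ⟨x, hx, y, hy, rfl⟩
      have hx' : dist x (α T) < min ε (δ₁ / 2) :=
        mem_ball.mp (hδ₂' X' hX'' r hr' T le_rfl hx)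
      have hyw : dist (y - h x) (0 : EuclideanSpace ℝ (Fin m)) ≤ δ₁ / 2 := by
        rw [dist_zero_right, ← dist_eq_norm]
        exact le_trans (mem_closedBall.mp hy) (hr.2.trans ((min_le_right _ _).trans (min_le_right _ _)))
      have hdist : dist ((x, y - h x) : EuclideanSpace ℝ (Fin n) × EuclideanSpace ℝ (Fin m))
          (α T, 0) < δ₁ := by
        rw [Prod.dist_eq]
        exact max_lt (lt_of_lt_of_le hx' ((min_le_right _ _).trans (by linarith)))
          (lt_of_le_of_lt hyw (by linarith))
      have := hδ₁' hdist
      simpa [α, nominalExec, add_sub_cancel] using this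

/-- Convergence of reachable sets to the nominal execution: for continuous
dynamics `f` and continuous observer `h`, on any finite horizon `T` and for any
`ε > 0` there is `δ > 0` such that from any initial set contained in
`closedBall x₀ δ` and with any contract radius `r ∈ [0, δ]`, the reachable sets
stay within `ε` of the nominal execution; consequently, for initial sets
shrinking to `{x₀}` and radii tending to `0`, the reachable sets converge to the
single nominal execution on every finite horizon. -/
theorem reach_converges_to_nominal {n m : ℕ}
    (f : EuclideanSpace ℝ (Fin n) × EuclideanSpace ℝ (Fin m) → EuclideanSpace ℝ (Fin n))
    (h : EuclideanSpace ℝ (Fin n) → EuclideanSpace ℝ (Fin m))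
    (hf : Continuous f) (hh : Continuous h)
    (x₀ : EuclideanSpace ℝ (Fin n)) :
    (∀ T : ℕ, ∀ ε > (0 : ℝ), ∃ δ > (0 : ℝ),
      ∀ X' ⊆ closedBall x₀ δ, ∀ r ∈ Set.Icc (0 : ℝ) δ, ∀ t ≤ T,
        reachBall f h X' r t ⊆ ball (nominalExec f h x₀ t) ε) ∧
    (∀ (Xk : ℕ → Set (EuclideanSpace ℝ (Fin n))) (δk rk : ℕ → ℝ),
      (∀ k, Xk k ⊆ closedBall x₀ (δk k)) →
      Tendsto δk atTop (nhds 0) →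
      Tendsto rk atTop (nhds 0) →
      ∀ T : ℕ, ∀ ε > (0 : ℝ), ∃ K : ℕ, ∀ k ≥ K, ∀ t ≤ T,
        reachBall f h (Xk k) (rk k) t ⊆ ball (nominalExec f h x₀ t) ε) := by
  refine ⟨reach_key f h hf hh x₀, ?_⟩
  intro Xk δk rk hXk hδk hrk T ε hε
  obtain ⟨δ, hδ, hδ'⟩ := reach_key f h hf hh x₀ T ε hε
  have h1 : ∀ᶠ k in atTop, |δk k| < δ :=
    (hδk.eventually (eventually_abs_sub_lt 0 hδ)).mono (by simp)
  have h2 : ∀ᶠ k in atTop, |rk k| < δ :=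
    (hrk.eventually (eventually_abs_sub_lt 0 hδ)).mono (by simp)
  obtain ⟨K, hK⟩ := (h1.and h2).exists_forall_of_atTop
  refine ⟨K, fun k hk t ht => ?_⟩
  obtain ⟨hk1, hk2⟩ := hK k hk
  have hsub : reachBall f h (Xk k) (rk k) t ⊆ reachBall f h (Xk k) (max (rk k) 0) t :=
    reachBall_mono f h (le_refl _) (le_max_left _ _) t
  refine hsub.trans (hδ' (Xk k) ?_ (max (rk k) 0) ⟨le_max_right _ _, ?_⟩ t ht)
  · exact (hXk k).trans (closedBall_subset_closedBall (le_trans (le_abs_self _) hk1.le))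
  · exact max_le (le_trans (le_abs_self _) hk2.le) hδ.le
end
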